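/- For any τ > 0 and ε > 0, as ρ → 0⁺ one has ∫_{B_{√8 ε/(τρ)}(0)} (1 + |x|²/8)^{-2} · ( −4 log ρ − log(τ²/8) − 2 log(1 + |x|²/8) )² dx = 128π (log ρ)² · (1 + o(1)). -/

import Mathlib

open MeasureTheory Real Filter Topology Set

/-!
In polar coordinates the integral becomes `π ∫₀^{R²} (1 + s/8)⁻² (a - 2 log (1 + s/8))² ds`
with `a = -4 log ρ - log (τ²/8)`, and `u = 1 + s/8` turns it into `8π ∫₁^U u⁻² (a - 2 log u)² du`,
which has the closed form `8π (P a - P (a - 2 log U) / U)` for `P y = y² - 4y + 8`. Here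
`U = 1 + ε²/(τρ)²`, so `a - 2 log U = -log (τ²/8) - 2 log (ρ² + (ε/τ)²)` stays bounded while
`1/U = O(ρ²)`: the boundary term is negligible and `P a ∼ 16 (log ρ)²`.
-/

theorem integral_comp_sq_add_sq (g : ℝ → ℝ) :
    ∫ x : ℝ × ℝ, g (x.1 ^ 2 + x.2 ^ 2) = π * ∫ s in Ioi 0, g s := by
  have hpolar : EqOn
      (fun p : ℝ × ℝ ↦ p.1 • g ((polarCoord.symm p).1 ^ 2 + (polarCoord.symm p).2 ^ 2))
      (fun p ↦ p.1 * g (p.1 ^ 2) * 1) polarCoord.target := by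
    rintro ⟨r, θ⟩ -
    simp only [polarCoord_symm_apply, smul_eq_mul, mul_one, mul_pow, ← mul_add, cos_sq_add_sin_sq]
  have hsubst : ∫ r in Ioi (0 : ℝ), r * g (r ^ 2) = (∫ s in Ioi 0, g s) / 2 := by
    rw [← integral_comp_rpow_Ioi_of_pos (g := g) two_pos, ← integral_div]
    refine setIntegral_congr_fun measurableSet_Ioi fun r _ ↦ ?_
    norm_num [rpow_natCast]
    ring
  rw [← integral_comp_polarCoord_symm,
    setIntegral_congr_fun polarCoord.open_target.measurableSet hpolar, polarCoord_target,
    Measure.volume_eq_prod,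
    setIntegral_prod_mul (fun r ↦ r * g (r ^ 2)) (fun _ ↦ (1 : ℝ)), hsubst]
  simp only [integral_const, smul_eq_mul, mul_one, Measure.real, Measure.restrict_apply_univ,
    volume_Ioo]
  rw [ENNReal.toReal_ofReal (by linarith [pi_pos])]
  ring

theorem setIntegral_sq_add_sq_lt (g : ℝ → ℝ) {r : ℝ} (hr : 0 ≤ r) :
    ∫ x in {x : ℝ × ℝ | x.1 ^ 2 + x.2 ^ 2 < r}, g (x.1 ^ 2 + x.2 ^ 2) = π * ∫ s in 0..r, g s := by
  have hdisk : MeasurableSet {x : ℝ × ℝ | x.1 ^ 2 + x.2 ^ 2 < r} :=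
    measurableSet_lt (by fun_prop) measurable_const
  have hball := integral_comp_sq_add_sq ((Iio r).indicator g)
  rw [setIntegral_indicator measurableSet_Iio, Ioi_inter_Iio, ← integral_Ioc_eq_integral_Ioo,
    ← intervalIntegral.integral_of_le hr] at hball
  rw [← hball, ← integral_indicator hdisk]
  rfl

theorem hasDerivAt_log_sq_primitive (a : ℝ) {u : ℝ} (hu : 0 < u) :
    HasDerivAt (fun u ↦ -((a - 2 * log u) ^ 2 - 4 * (a - 2 * log u) + 8) / u)
      ((u ^ 2)⁻¹ * (a - 2 * log u) ^ 2) u := by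
  have hy : HasDerivAt (fun u ↦ a - 2 * log u) (-(2 * u⁻¹)) u :=
    ((hasDerivAt_log hu.ne').const_mul 2).const_sub a
  refine ((((hy.pow 2).sub (hy.const_mul 4)).add_const 8).neg.div (hasDerivAt_id' u)
    hu.ne').congr_deriv ?_
  simp only [Pi.neg_apply, Pi.sub_apply, Pi.pow_apply]
  field_simp
  ring

theorem integral_inv_sq_mul_sub_log_sq (a : ℝ) {U : ℝ} (hU : 0 < U) :
    ∫ u in 1..U, (u ^ 2)⁻¹ * (a - 2 * log u) ^ 2
      = (a ^ 2 - 4 * a + 8) - ((a - 2 * log U) ^ 2 - 4 * (a - 2 * log U) + 8) / U := by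
  have hpos : ∀ u ∈ uIcc 1 U, 0 < u := fun u hu ↦
    lt_of_lt_of_le (lt_min one_pos hU) hu.1
  rw [intervalIntegral.integral_eq_sub_of_hasDerivAt
    (fun u hu ↦ hasDerivAt_log_sq_primitive a (hpos u hu))]
  · simp only [log_one]
    ring
  · refine ContinuousOn.intervalIntegrable fun u hu ↦ ContinuousAt.continuousWithinAt ?_
    have := (hpos u hu).ne'
    fun_prop (disch := positivity)

theorem setIntegral_disk_inv_sq_mul_sub_log_sq (a : ℝ) {r : ℝ} (hr : 0 ≤ r) :
    ∫ x in {x : ℝ × ℝ | x.1 ^ 2 + x.2 ^ 2 < r},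
        ((1 + (x.1 ^ 2 + x.2 ^ 2) / 8) ^ 2)⁻¹ * (a - 2 * log (1 + (x.1 ^ 2 + x.2 ^ 2) / 8)) ^ 2
      = 8 * π * ((a ^ 2 - 4 * a + 8) - ((a - 2 * log (1 + r / 8)) ^ 2
          - 4 * (a - 2 * log (1 + r / 8)) + 8) / (1 + r / 8)) := by
  have hsubst := intervalIntegral.integral_comp_div_add
    (fun u ↦ (u ^ 2)⁻¹ * (a - 2 * log u) ^ 2) (a := 0) (b := r) (by norm_num : (8 : ℝ) ≠ 0) 1
  simp only [zero_div, add_comm _ (1 : ℝ), add_zero, smul_eq_mul] at hsubst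
  rw [setIntegral_sq_add_sq_lt (fun s ↦ ((1 + s / 8) ^ 2)⁻¹ * (a - 2 * log (1 + s / 8)) ^ 2) hr,
    hsubst, integral_inv_sq_mul_sub_log_sq a (by positivity)]
  ring

theorem tendsto_sub_mul_div_sq {α : Type*} {l : Filter α} {t y w : α → ℝ} (c y₀ : ℝ)
    (ht : Tendsto t l atBot) (hy : Tendsto y l (𝓝 y₀)) (hw : Tendsto w l (𝓝 0)) :
    Tendsto (fun x ↦ ((-4 * t x - c) ^ 2 - 4 * (-4 * t x - c) + 8
      - (y x ^ 2 - 4 * y x + 8) * w x) / (16 * t x ^ 2)) l (𝓝 1) := by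
  have hu : Tendsto (fun x ↦ (t x)⁻¹) l (𝓝 0) := tendsto_inv_atBot_zero.comp ht
  -- the quotient, written in terms of `u = 1 / t`, `y` and `w`
  have hF : Continuous fun p : ℝ × ℝ × ℝ ↦ ((4 + c * p.1) ^ 2 + 4 * (4 + c * p.1) * p.1
      + 8 * p.1 ^ 2 - (p.2.1 ^ 2 - 4 * p.2.1 + 8) * p.2.2 * p.1 ^ 2) / 16 := by
    fun_prop
  have hlim := (hF.tendsto (0, y₀, 0)).comp (hu.prodMk_nhds (hy.prodMk_nhds hw))
  norm_num at hlim
  refine hlim.congr' ?_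
  filter_upwards [ht.eventually_ne_atBot 0] with x hx
  simp only [Function.comp_apply]
  field_simp
  ring

theorem stmt17 (τ ε : ℝ) (hτ : 0 < τ) (hε : 0 < ε) :
    Tendsto (fun ρ : ℝ =>
      (∫ x in {x : ℝ × ℝ | x.1^2 + x.2^2 < (Real.sqrt 8 * ε / (τ * ρ))^2},
        ((1 + (x.1^2 + x.2^2) / 8)^2)⁻¹ *
          (-4 * Real.log ρ - Real.log (τ^2 / 8) -
            2 * Real.log (1 + (x.1^2 + x.2^2) / 8))^2) /
        (128 * π * (Real.log ρ)^2))
      (𝓝[>] 0) (𝓝 1) := by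
  set k := (ε / τ) ^ 2 with hk_def
  have hk : 0 < k := by positivity
  have hy : Tendsto (fun ρ : ℝ ↦ -log (τ ^ 2 / 8) - 2 * log (ρ ^ 2 + k)) (𝓝[>] 0)
      (𝓝 (-log (τ ^ 2 / 8) - 2 * log (0 ^ 2 + k))) :=
    tendsto_nhdsWithin_of_tendsto_nhds (Continuous.tendsto (by
      fun_prop (disch := intro; positivity)) 0)
  have hw : Tendsto (fun ρ : ℝ ↦ ρ ^ 2 / (ρ ^ 2 + k)) (𝓝[>] 0) (𝓝 0) := by
    have := (Continuous.tendsto (f := fun ρ : ℝ ↦ ρ ^ 2 / (ρ ^ 2 + k)) (by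
      fun_prop (disch := intro; positivity)) 0)
    simpa using tendsto_nhdsWithin_of_tendsto_nhds this
  refine (tendsto_sub_mul_div_sq (log (τ ^ 2 / 8)) _ tendsto_log_nhdsGT_zero hy hw).congr' ?_
  filter_upwards [self_mem_nhdsWithin] with ρ (hρ : 0 < ρ)
  have hU : 1 + (√8 * ε / (τ * ρ)) ^ 2 / 8 = (ρ ^ 2 + k) / ρ ^ 2 := by
    rw [div_pow, mul_pow, mul_pow, sq_sqrt (by norm_num : (0 : ℝ) ≤ 8), hk_def]
    field_simp
  have hlogU : log (1 + (√8 * ε / (τ * ρ)) ^ 2 / 8) = log (ρ ^ 2 + k) - 2 * log ρ := by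
    rw [hU, log_div (by positivity) (by positivity), log_pow]
    push_cast
    ring
  rw [setIntegral_disk_inv_sq_mul_sub_log_sq _ (sq_nonneg _), hlogU, hU]
  field_simp
  ring
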